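/- Let V and W be finite-dimensional locally analytic representations of the Borel subgroup B of a split connected reductive p-adic group, with B = N·T. Then (1) every L-linear map V → W that is equivariant for the actions of the Lie algebra b and the torus T is automatically B-equivariant, i.e. Hom_B(V,W) = Hom_{(b,T)}(V,W); and (2) every (b,T)-stable linear subspace V₀ ⊆ V is B-stable. -/

import Mathlib

attribute [local instance 100] LieRing.ofAssociativeRing

/-!
On `N` the representations are truncated exponentials of the nilpotent operators `π(Y)`, and a
linear map commuting with `π(Y)` commutes with every polynomial in it; likewise a `π(Y)`-stable
subspace is stable under such polynomials. So `(𝔟, T)`-equivariance (resp. stability) gives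
`N`-equivariance (resp. stability), and `B = N·T` finishes the argument, since the elements of
`B` acting equivariantly (resp. stabilizing `V₀`) form a submonoid.
-/

open Finset

namespace Module.End

variable {R M : Type*} [Semiring R] [AddCommMonoid M] [Module R M]

theorem sum_range_smul_pow_apply_eq_of_le {A : Module.End R M} {v : M} {k m : ℕ}
    (hv : (A ^ k) v = 0) (hkm : k ≤ m) (c : ℕ → R) :
    ∑ n ∈ range m, c n • (A ^ n) v = ∑ n ∈ range k, c n • (A ^ n) v := by
  refine (sum_subset (range_subset_range.2 hkm) fun n _ hn => ?_).symm
  rw [pow_map_zero_of_le (by simpa using hn) hv, smul_zero]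

end Module.End

namespace LinearMap

variable {R M M' : Type*} [CommSemiring R] [AddCommMonoid M] [Module R M]
  [AddCommMonoid M'] [Module R M']

theorem map_sum_range_smul_pow_apply (f : M →ₗ[R] M') {A : Module.End R M}
    {A' : Module.End R M'} (hf : A'.comp f = f.comp A) {v : M} {k k' : ℕ}
    (hv : (A ^ k) v = 0) (hfv : (A' ^ k') (f v) = 0) (c : ℕ → R) :
    f (∑ n ∈ Finset.range k, c n • (A ^ n) v) = ∑ n ∈ Finset.range k', c n • (A' ^ n) (f v) := by
  have hpow (n : ℕ) : f ((A ^ n) v) = (A' ^ n) (f v) :=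
    (LinearMap.congr_fun (Module.End.commute_pow_left_of_commute hf n) v).symm
  have hfv' : (A' ^ k) (f v) = 0 := by rw [← hpow, hv, map_zero]
  simp only [map_sum, map_smul, hpow]
  rw [← Module.End.sum_range_smul_pow_apply_eq_of_le hfv' (le_max_left k k'),
    ← Module.End.sum_range_smul_pow_apply_eq_of_le hfv (le_max_right k k')]

end LinearMap

section Submonoids

variable {R B V W : Type*} [Semiring R] [Monoid B] [AddCommMonoid V] [Module R V]
  [AddCommMonoid W] [Module R W]

def equivariantSubmonoid (ρV : B →* (V ≃ₗ[R] V)) (ρW : B →* (W ≃ₗ[R] W)) (f : V →ₗ[R] W) :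
    Submonoid B where
  carrier := {b | ∀ v, f (ρV b v) = ρW b (f v)}
  one_mem' v := by simp
  mul_mem' {a b} ha hb v := by
    rw [map_mul, map_mul, LinearEquiv.mul_apply, LinearEquiv.mul_apply, ha, hb]

def invariantSubmonoid (ρV : B →* (V ≃ₗ[R] V)) (V₀ : Submodule R V) : Submonoid B where
  carrier := {b | ∀ v ∈ V₀, ρV b v ∈ V₀}
  one_mem' v hv := by simpa using hv
  mul_mem' {a b} ha hb v hv := by
    simpa only [map_mul, LinearEquiv.mul_apply] using ha _ (hb v hv)

end Submonoids

theorem Submonoid.mem_of_forall_eq_mul {B : Type*} [Monoid B] {S : Submonoid B} {N T : Set B}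
    (hB : ∀ b : B, ∃ n ∈ N, ∃ t ∈ T, b = n * t) (hN : N ⊆ S) (hT : T ⊆ S) (b : B) : b ∈ S := by
  obtain ⟨n, hn, t, ht, rfl⟩ := hB b
  exact S.mul_mem (hN hn) (hT ht)

theorem statement4_general {L : Type*} [Field L]
    {𝔟 : Type*} [LieRing 𝔟] [LieAlgebra L 𝔟]
    (𝔫 : LieSubalgebra L 𝔟)
    {B : Type*} [Group B] (T N : Subgroup B)
    (hB : ∀ b : B, ∃ n ∈ N, ∃ t ∈ T, b = n * t)
    (Exp : 𝔫 → B)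
    (hExpSurj : ∀ g ∈ N, ∃ Y : 𝔫, Exp Y = g)
    {V W : Type*} [AddCommGroup V] [Module L V]
    [AddCommGroup W] [Module L W]
    (ρV : B →* (V ≃ₗ[L] V)) (πV : 𝔟 →ₗ⁅L⁆ Module.End L V)
    (ρW : B →* (W ≃ₗ[L] W)) (πW : 𝔟 →ₗ⁅L⁆ Module.End L W)
    (hexpV : ∀ (Y : 𝔫) (v : V), ∃ k : ℕ, (πV (Y : 𝔟)) ^ k = 0 ∧
      ρV (Exp Y) v = ∑ n ∈ Finset.range k, (n.factorial : L)⁻¹ • ((πV (Y : 𝔟) ^ n) v))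
    (hexpW : ∀ (Y : 𝔫) (w : W), ∃ k : ℕ, (πW (Y : 𝔟)) ^ k = 0 ∧
      ρW (Exp Y) w = ∑ n ∈ Finset.range k, (n.factorial : L)⁻¹ • ((πW (Y : 𝔟) ^ n) w)) :
    (∀ f : V →ₗ[L] W,
      (∀ (X : 𝔟) (v : V), f (πV X v) = πW X (f v)) →
      (∀ t ∈ T, ∀ v : V, f (ρV t v) = ρW t (f v)) →
      ∀ (b : B) (v : V), f (ρV b v) = ρW b (f v)) ∧
    (∀ V₀ : Submodule L V,
      (∀ (X : 𝔟), ∀ v ∈ V₀, πV X v ∈ V₀) →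
      (∀ t ∈ T, ∀ v ∈ V₀, ρV t v ∈ V₀) →
      ∀ (b : B), ∀ v ∈ V₀, ρV b v ∈ V₀) := by
  have hN {S : Submonoid B} (hS : ∀ Y, Exp Y ∈ S) : (N : Set B) ⊆ S := fun g hg => by
    obtain ⟨Y, rfl⟩ := hExpSurj g hg
    exact hS Y
  refine ⟨fun f hLie hT => ?_, fun V₀ hLie hT => ?_⟩
  · have hcomm (X : 𝔟) : (πW X).comp f = f.comp (πV X) :=
      LinearMap.ext fun v => (hLie X v).symm
    refine Submonoid.mem_of_forall_eq_mul (S := equivariantSubmonoid ρV ρW f) hB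
      (hN fun Y v => ?_) hT
    obtain ⟨kV, hkV, hV⟩ := hexpV Y v
    obtain ⟨kW, hkW, hW⟩ := hexpW Y (f v)
    rw [hV, hW]
    exact f.map_sum_range_smul_pow_apply (hcomm Y) (by simp [hkV]) (by simp [hkW]) _
  · refine Submonoid.mem_of_forall_eq_mul (S := invariantSubmonoid ρV V₀) hB
      (hN fun Y v hv => ?_) hT
    obtain ⟨k, -, hV⟩ := hexpV Y v
    rw [hV]
    exact V₀.sum_mem fun n _ =>
      V₀.smul_mem _ (Module.End.pow_apply_mem_of_forall_mem n (hLie Y) v hv)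

/-- Corollary 2.6: Let `V`, `W` be finite-dimensional locally analytic
representations of the Borel subgroup `B = N·T` of a split connected reductive `p`-adic group.
Then (1) `Hom_B(V,W) = Hom_{(𝔟,T)}(V,W)`: every `L`-linear map `V → W` equivariant for the
derived `𝔟`-action and for `T` is `B`-equivariant; and (2) every `(𝔟,T)`-stable subspace
`V₀ ⊆ V` is `B`-stable.

We encode the key structure: `T`, `N` are subgroups of `B` with `B = N·T` (`hB`), the action of
`N` is exponentiated from the nilpotent action of `𝔫 ⊆ 𝔟` (`hexpV`, `hexpW`, with `Exp`
surjecting onto `N`), and `π_V`, `π_W` are the derived actions of the locally analytic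
representations `ρ_V`, `ρ_W`. -/
theorem statement4 {L : Type*} [Field L] [CharZero L]
    {𝔟 : Type*} [LieRing 𝔟] [LieAlgebra L 𝔟]
    (𝔫 : LieSubalgebra L 𝔟)
    {B : Type*} [Group B] (T N : Subgroup B)
    (hB : ∀ b : B, ∃ n ∈ N, ∃ t ∈ T, b = n * t)
    (Exp : 𝔫 → B) (hExpN : ∀ Y : 𝔫, Exp Y ∈ N)
    (hExpSurj : ∀ g ∈ N, ∃ Y : 𝔫, Exp Y = g)
    {V W : Type*} [AddCommGroup V] [Module L V] [FiniteDimensional L V]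
    [AddCommGroup W] [Module L W] [FiniteDimensional L W]
    (ρV : B →* (V ≃ₗ[L] V)) (πV : 𝔟 →ₗ⁅L⁆ Module.End L V)
    (ρW : B →* (W ≃ₗ[L] W)) (πW : 𝔟 →ₗ⁅L⁆ Module.End L W)
    (hexpV : ∀ (Y : 𝔫) (v : V), ∃ k : ℕ, (πV (Y : 𝔟)) ^ k = 0 ∧
      ρV (Exp Y) v = ∑ n ∈ Finset.range k, (n.factorial : L)⁻¹ • ((πV (Y : 𝔟) ^ n) v))
    (hexpW : ∀ (Y : 𝔫) (w : W), ∃ k : ℕ, (πW (Y : 𝔟)) ^ k = 0 ∧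
      ρW (Exp Y) w = ∑ n ∈ Finset.range k, (n.factorial : L)⁻¹ • ((πW (Y : 𝔟) ^ n) w)) :
    (∀ f : V →ₗ[L] W,
      (∀ (X : 𝔟) (v : V), f (πV X v) = πW X (f v)) →
      (∀ t ∈ T, ∀ v : V, f (ρV t v) = ρW t (f v)) →
      ∀ (b : B) (v : V), f (ρV b v) = ρW b (f v)) ∧
    (∀ V₀ : Submodule L V,
      (∀ (X : 𝔟), ∀ v ∈ V₀, πV X v ∈ V₀) →
      (∀ t ∈ T, ∀ v ∈ V₀, ρV t v ∈ V₀) →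
      ∀ (b : B), ∀ v ∈ V₀, ρV b v ∈ V₀) :=
  statement4_general 𝔫 T N hB Exp hExpSurj ρV πV ρW πW hexpV hexpW
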